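/- arXiv:1411.6709 — 3 statements merged into one kernel-verified Lean document; each statement's English description precedes it below -/
import Mathlib

section
/- Let I ⊆ ℝ be an interval, let T : I → I be a bijection, let a : I → ℝ be an injective continuously differentiable solution of FET(1) (a(T(x)) = a(x) + 1 for all x ∈ I), and let f : I → ℝ be a continuously differentiable solution of FET(0) (f(T(x)) = f(x) for all x ∈ I). Then there exists a function P : ℝ → ℝ, periodic with period 1, such that f(x) = P(a(x)) for all x ∈ I. -/
open Set

/-!
Along a `T`-orbit `a` grows by exactly `1` per step while `f` stays constant. Since `a` is
injective on `I`, two points of `I` whose `a`-values differ by an integer `n ≥ 0` are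
`x` and `T^[n] x`, so they have the same `f`-value. Hence `f` is a function of `a x` modulo `1`,
i.e. of the class of `a x` in `AddCircle 1`.
-/

namespace Set.MapsTo

variable {α : Type*} {T : α → α} {I : Set α}

theorem apply_iterate_eq_add_nsmul {M : Type*} [AddMonoid M] (hT : MapsTo T I I) {g : α → M}
    {c : M} (hg : ∀ x ∈ I, g (T x) = g x + c) (n : ℕ) {x : α} (hx : x ∈ I) :
    g (T^[n] x) = g x + n • c := by
  induction n with
  | zero => simp
  | succ n ih =>
    rw [Function.iterate_succ_apply', hg _ (hT.iterate n hx), ih, succ_nsmul, add_assoc]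

theorem apply_iterate_eq {β : Type*} (hT : MapsTo T I I) {g : α → β}
    (hg : ∀ x ∈ I, g (T x) = g x) (n : ℕ) {x : α} (hx : x ∈ I) : g (T^[n] x) = g x := by
  induction n with
  | zero => rfl
  | succ n ih => rw [Function.iterate_succ_apply', hg _ (hT.iterate n hx), ih]

end Set.MapsTo

theorem apply_eq_of_apply_eq_add_int {α β : Type*} {T : α → α} {I : Set α}
    (hT : MapsTo T I I) {a : α → ℝ} (ha : InjOn a I) (haT : ∀ x ∈ I, a (T x) = a x + 1)
    {f : α → β} (hfT : ∀ x ∈ I, f (T x) = f x) {x y : α} (hx : x ∈ I) (hy : y ∈ I) {k : ℤ}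
    (hk : a y = a x + k) : f y = f x := by
  have of_nat : ∀ {x y : α}, x ∈ I → y ∈ I → ∀ n : ℕ, a y = a x + n → f y = f x := by
    intro x y hx hy n hn
    have hy' : y = T^[n] x := ha hy (hT.iterate n hx) <| by
      rw [hn, hT.apply_iterate_eq_add_nsmul haT n hx, nsmul_one]
    rw [hy', hT.apply_iterate_eq hfT n hx]
  obtain ⟨n, rfl | rfl⟩ := Int.eq_nat_or_neg k
  · exact of_nat hx hy n hk
  · exact (of_nat hy hx n (by push_cast at hk; linarith)).symm

theorem exists_periodic_comp_eq {α β : Type*} [Nonempty β] {I : Set α} {a : α → ℝ} {f : α → β}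
    {p : ℝ} (h : ∀ x ∈ I, ∀ y ∈ I, ∀ k : ℤ, a y = a x + k * p → f y = f x) :
    ∃ P : ℝ → β, (∀ y, P (y + p) = P y) ∧ ∀ x ∈ I, f x = P (a x) := by
  let g : I → AddCircle p := fun x => (a x : AddCircle p)
  have hfg : Function.FactorsThrough (fun x : I => f x) g := by
    intro x y hxy
    obtain ⟨k, hk⟩ := AddSubgroup.mem_zmultiples_iff.mp (QuotientAddGroup.eq.mp hxy)
    exact (h x x.2 y y.2 k (by rw [zsmul_eq_mul] at hk; linarith)).symm
  exact ⟨fun y => Function.extend g (fun x : I => f x) (fun _ => Classical.arbitrary β) y,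
    fun y => by simp, fun x hx => (hfg.extend_apply _ ⟨x, hx⟩).symm⟩

theorem stmt7_general (I : Set ℝ) (T : ℝ → ℝ) (hT : BijOn T I I)
    (a : ℝ → ℝ) (hainj : InjOn a I)
    (hAbel : ∀ x ∈ I, a (T x) = a x + 1)
    (f : ℝ → ℝ)
    (hSchroder : ∀ x ∈ I, f (T x) = f x) :
    ∃ P : ℝ → ℝ, (∀ y : ℝ, P (y + 1) = P y) ∧ ∀ x ∈ I, f x = P (a x) :=
  exists_periodic_comp_eq fun x hx y hy k hk =>
    apply_eq_of_apply_eq_add_int hT.mapsTo hainj hAbel hSchroder hx hy (by rwa [mul_one] at hk)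

/-- If `a` is an injective C¹ solution of FET(1) and `f` a C¹ solution of
FET(0) on an interval `I` with `T : I → I` a bijection, then `f = P ∘ a` on `I` for some
period-1 function `P`. -/
theorem stmt7 (I : Set ℝ) (hI : I.OrdConnected) (T : ℝ → ℝ) (hT : BijOn T I I)
    (a : ℝ → ℝ) (hainj : InjOn a I) (haC1 : ContDiffOn ℝ 1 a I)
    (hAbel : ∀ x ∈ I, a (T x) = a x + 1)
    (f : ℝ → ℝ) (hfC1 : ContDiffOn ℝ 1 f I)
    (hSchroder : ∀ x ∈ I, f (T x) = f x) :
    ∃ P : ℝ → ℝ, (∀ y : ℝ, P (y + 1) = P y) ∧ ∀ x ∈ I, f x = P (a x) :=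
  stmt7_general I T hT a hainj hAbel f hSchroder
end

section
/- Let 0 < b ≤ ∞ and let T be a continuous strictly increasing real-valued function on [0, b) with T([0, b)) = [c, b) for some c > 0 and T(x) > x for all 0 ≤ x < b. Then there exists a solution a : [0, b) → ℝ of FET(1), i.e. a(T(x)) = a(x) + 1 whenever x and T(x) lie in [0, b). Moreover, there is a unique such solution with prescribed values on [0, T(0)); and if the prescribed values are continuous on [0, T(0)) and satisfy lim_{x → T(0)⁻} a(x) = a(0) + 1, then the solution a is continuous on [0, b). -/
/-!
The orbit `x₀ < T x₀ < T² x₀ < ⋯` cannot converge inside `I`, since its limit would be a fixed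
point of `T`; so the intervals `[Tⁿ x₀, Tⁿ⁺¹ x₀)` tile `I`, and `T` maps each one onto the next.
A solution of `f ∘ T = f + Q` is therefore determined by its values `a₀` on `[x₀, T x₀)`: on the
`k`-th tile it is `a₀ ∘ T⁻ᵏ + k Q`. If `a₀` is continuous with `a₀(T x₀⁻) = a₀ x₀ + Q`, continuity
spreads from one closed tile to the next because `T⁻¹` is continuous there (it is strictly monotone
with an interval as image), and the tiles are glued along their common endpoints.
-/

open Set Filter Function Topology

theorem StrictMonoOn.continuousOn_Icc_of_surjOn {α β : Type*} [LinearOrder α]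
    [TopologicalSpace α] [OrderTopology α] [LinearOrder β] [TopologicalSpace β] [OrderTopology β]
    [DenselyOrdered β] {g : α → β} {p q : α}
    (hg : StrictMonoOn g (Icc p q)) (hsurj : SurjOn g (Icc p q) (Icc (g p) (g q))) :
    ContinuousOn g (Icc p q) := by
  intro x hx
  have hp : p ∈ Icc p q := ⟨le_rfl, hx.1.trans hx.2⟩
  have hq : q ∈ Icc p q := ⟨hx.1.trans hx.2, le_rfl⟩
  rcases hx.1.eq_or_lt with rfl | hpx <;> rcases hx.2.eq_or_lt with rfl | hxq
  · simpa only [Icc_self] using continuousWithinAt_singleton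
  · refine (continuousWithinAt_Icc_iff_Ici hxq).2 ?_
    exact hg.continuousWithinAt_right_of_image_mem_nhdsWithin (Icc_mem_nhdsGE hxq)
      (mem_of_superset (Icc_mem_nhdsGE (hg hp hq hxq)) hsurj)
  · refine (continuousWithinAt_Icc_iff_Iic hpx).2 ?_
    exact hg.continuousWithinAt_left_of_image_mem_nhdsWithin (Icc_mem_nhdsLE hpx)
      (mem_of_superset (Icc_mem_nhdsLE (hg hp hq hpx)) hsurj)
  · exact (hg.continuousAt_of_image_mem_nhds (Icc_mem_nhds hpx hxq)
      (mem_of_superset (Icc_mem_nhds (hg hp hx hpx) (hg hx hq hxq)) hsurj)).continuousWithinAt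

theorem ContinuousOn.Icc_of_Ico {α β : Type*} [TopologicalSpace α] [LinearOrder α] [T1Space α]
    [TopologicalSpace β] {f : α → β} {p q : α} (hpq : p ≤ q) (hf : ContinuousOn f (Ico p q))
    (hq : Tendsto f (𝓝[<] q) (𝓝 (f q))) : ContinuousOn f (Icc p q) := by
  rw [← Ico_insert_right hpq]
  rintro x (rfl | hx) <;> refine continuousWithinAt_insert.2 ?_
  · exact hq.mono_left (nhdsWithin_mono _ Ico_subset_Iio_self)
  · exact hf x hx

theorem strictMono_iterate_apply_of_lt {α : Type*} [Preorder α] {I : Set α} {T : α → α} {x₀ : α}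
    (hT : MapsTo T I I) (hlt : ∀ x ∈ I, x < T x) (hx₀ : x₀ ∈ I) : StrictMono (T^[·] x₀) :=
  strictMono_nat_of_lt_succ fun n => by
    simpa only [iterate_succ_apply'] using hlt _ (hT.iterate n hx₀)

theorem exists_lt_iterate_apply {α : Type*} [ConditionallyCompleteLinearOrder α]
    [TopologicalSpace α] [OrderTopology α] {I : Set α} [I.OrdConnected] {T : α → α} {x₀ y : α}
    (hcont : ContinuousOn T I) (hT : MapsTo T I I) (hlt : ∀ x ∈ I, x < T x) (hx₀ : x₀ ∈ I)
    (hy : y ∈ I) : ∃ n, y < T^[n] x₀ := by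
  by_contra! hle
  have hmono := (strictMono_iterate_apply_of_lt hT hlt hx₀).monotone
  obtain ⟨L, hL⟩ : ∃ L, Tendsto (T^[·] x₀) atTop (𝓝 L) :=
    ⟨_, tendsto_atTop_ciSup hmono ⟨y, forall_mem_range.2 hle⟩⟩
  have hLI : L ∈ I := ‹I.OrdConnected›.out hx₀ hy ⟨hmono.ge_of_tendsto hL 0, le_of_tendsto' hL hle⟩
  have hTL : Tendsto (fun n => T (T^[n] x₀)) atTop (𝓝 (T L)) :=
    (hcont L hLI).tendsto.comp
      (tendsto_nhdsWithin_iff.2 ⟨hL, Eventually.of_forall fun n => hT.iterate n hx₀⟩)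
  have hL' : Tendsto (fun n => T (T^[n] x₀)) atTop (𝓝 L) := by
    simpa only [← iterate_succ_apply' T] using (tendsto_add_atTop_iff_nat 1).2 hL
  exact (hlt L hLI).ne' (tendsto_nhds_unique hTL hL')

def SolvesFET (I : Set ℝ) (T : ℝ → ℝ) (Q : ℝ) (f : ℝ → ℝ) : Prop :=
  ∀ x ∈ I, T x ∈ I → f (T x) = f x + Q

/-- `T` acts on `I = [x₀, sup I)` like a translation: the intervals `[Tⁿ x₀, Tⁿ⁺¹ x₀)` tile `I`
and `T` maps each of them onto the next one. -/
structure IsTranslationLike (T : ℝ → ℝ) (I : Set ℝ) (x₀ : ℝ) : Prop where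
  isLeast : IsLeast I x₀
  ordConnected : I.OrdConnected
  mapsTo : MapsTo T I I
  strictMonoOn : StrictMonoOn T I
  lt_apply : ∀ x ∈ I, x < T x
  surjOn : SurjOn T I (I ∩ Ici (T x₀))
  exists_lt_iterate : ∀ x ∈ I, ∃ n, x < T^[n] x₀

/-- The `k` with `x ∈ [T^[k] x₀, T^[k+1] x₀)`: the number of steps of `T⁻¹` taking `x` into
`[x₀, T x₀)`. -/
noncomputable def orbitIndex (T : ℝ → ℝ) (x₀ x : ℝ) : ℕ :=
  sInf {n | x < T^[n + 1] x₀}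

theorem orbitIndex_eq_zero {T : ℝ → ℝ} {x₀ x : ℝ} (hx : x < T x₀) : orbitIndex T x₀ x = 0 :=
  Nat.le_zero.1 (Nat.sInf_le hx)

noncomputable def fetExtension (T : ℝ → ℝ) (I : Set ℝ) (x₀ Q : ℝ) (a₀ : ℝ → ℝ) (x : ℝ) : ℝ :=
  a₀ ((invFunOn T I)^[orbitIndex T x₀ x] x) + orbitIndex T x₀ x * Q

theorem fetExtension_eqOn (T : ℝ → ℝ) (I : Set ℝ) (x₀ Q : ℝ) (a₀ : ℝ → ℝ) :
    EqOn (fetExtension T I x₀ Q a₀) a₀ (Ico x₀ (T x₀)) := by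
  intro x hx
  simp [fetExtension, orbitIndex_eq_zero hx.2]

namespace IsTranslationLike

variable {T : ℝ → ℝ} {I : Set ℝ} {x₀ : ℝ}

theorem iterate_mem (h : IsTranslationLike T I x₀) (n : ℕ) : T^[n] x₀ ∈ I :=
  h.mapsTo.iterate n h.isLeast.1

theorem strictMono_iterate (h : IsTranslationLike T I x₀) : StrictMono (T^[·] x₀) :=
  strictMono_iterate_apply_of_lt h.mapsTo h.lt_apply h.isLeast.1

theorem mem_Ico_orbitIndex (h : IsTranslationLike T I x₀) {x : ℝ} (hx : x ∈ I) :
    x ∈ Ico (T^[orbitIndex T x₀ x] x₀) (T^[orbitIndex T x₀ x + 1] x₀) := by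
  obtain ⟨n, hn⟩ := h.exists_lt_iterate x hx
  obtain ⟨m, rfl⟩ : ∃ m, n = m + 1 :=
    Nat.exists_eq_succ_of_ne_zero (by rintro rfl; exact (h.isLeast.2 hx).not_gt hn)
  refine ⟨?_, Nat.sInf_mem (s := {n | x < T^[n + 1] x₀}) ⟨m, hn⟩⟩
  rcases hk : orbitIndex T x₀ x with _ | k
  · exact h.isLeast.2 hx
  · exact not_lt.1 (Nat.notMem_of_lt_sInf (hk ▸ k.lt_succ_self : k < orbitIndex T x₀ x))

theorem orbitIndex_eq (h : IsTranslationLike T I x₀) {x : ℝ} {m : ℕ}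
    (hx : x ∈ Ico (T^[m] x₀) (T^[m + 1] x₀)) : orbitIndex T x₀ x = m := by
  refine le_antisymm (Nat.sInf_le hx.2) (not_lt.1 fun hlt => ?_)
  have := Nat.sInf_mem (s := {n | x < T^[n + 1] x₀}) ⟨m, hx.2⟩
  exact (hx.1.trans_lt this).not_ge (h.strictMono_iterate.monotone hlt)

theorem orbitIndex_apply (h : IsTranslationLike T I x₀) {x : ℝ} (hx : x ∈ I) :
    orbitIndex T x₀ (T x) = orbitIndex T x₀ x + 1 := by
  have hk := h.mem_Ico_orbitIndex hx
  refine h.orbitIndex_eq ⟨?_, ?_⟩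
  · rw [iterate_succ_apply']
    exact h.strictMonoOn.monotoneOn (h.iterate_mem _) hx hk.1
  · rw [iterate_succ_apply' T (_ + 1)]
    exact h.strictMonoOn hx (h.iterate_mem _) hk.2

theorem invFunOn_mem_and_apply (h : IsTranslationLike T I x₀) {y : ℝ} (hy : y ∈ I)
    (hy₀ : T x₀ ≤ y) : invFunOn T I y ∈ I ∧ T (invFunOn T I y) = y :=
  ⟨invFunOn_mem (h.surjOn ⟨hy, hy₀⟩), invFunOn_eq (h.surjOn ⟨hy, hy₀⟩)⟩

theorem invFunOn_apply (h : IsTranslationLike T I x₀) {x : ℝ} (hx : x ∈ I) :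
    invFunOn T I (T x) = x :=
  h.strictMonoOn.injOn.leftInvOn_invFunOn hx

theorem solvesFET_fetExtension (h : IsTranslationLike T I x₀) (Q : ℝ) (a₀ : ℝ → ℝ) :
    SolvesFET I T Q (fetExtension T I x₀ Q a₀) := by
  intro x hx _
  simp only [fetExtension, h.orbitIndex_apply hx, iterate_succ_apply, h.invFunOn_apply hx]
  push_cast
  ring

theorem eqOn_of_solvesFET (h : IsTranslationLike T I x₀) {Q : ℝ} {a a' : ℝ → ℝ}
    (ha : SolvesFET I T Q a) (ha' : SolvesFET I T Q a') (heq : EqOn a a' (Ico x₀ (T x₀))) :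
    EqOn a a' I := by
  suffices ∀ n, ∀ x ∈ I, x < T^[n] x₀ → a x = a' x from fun x hx =>
    let ⟨n, hn⟩ := h.exists_lt_iterate x hx
    this n x hx hn
  intro n
  induction n with
  | zero => exact fun x hx hlt => absurd (h.isLeast.2 hx) (not_le.2 hlt)
  | succ n ih =>
    intro x hx hlt
    rcases lt_or_ge x (T x₀) with hx₁ | hx₁
    · exact heq ⟨h.isLeast.2 hx, hx₁⟩
    obtain ⟨y, hy, rfl⟩ := h.surjOn ⟨hx, hx₁⟩
    rw [iterate_succ_apply'] at hlt
    rw [ha y hy hx, ha' y hy hx,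
      ih y hy ((h.strictMonoOn.lt_iff_lt hy (h.iterate_mem n)).1 hlt)]

theorem invFunOn_mem_and_apply_of_mem_Icc (h : IsTranslationLike T I x₀) {p q y : ℝ}
    (hp : p ∈ I) (hq : q ∈ I) (hy : y ∈ Icc (T p) (T q)) :
    invFunOn T I y ∈ I ∧ T (invFunOn T I y) = y :=
  h.invFunOn_mem_and_apply (h.ordConnected.out (h.mapsTo hp) (h.mapsTo hq) hy)
    ((h.strictMonoOn.monotoneOn h.isLeast.1 hp (h.isLeast.2 hp)).trans hy.1)

theorem mapsTo_invFunOn (h : IsTranslationLike T I x₀) {p q : ℝ} (hp : p ∈ I) (hq : q ∈ I) :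
    MapsTo (invFunOn T I) (Icc (T p) (T q)) (Icc p q) := by
  intro y hy
  obtain ⟨hyI, hTy⟩ := h.invFunOn_mem_and_apply_of_mem_Icc hp hq hy
  rw [← hTy] at hy
  exact ⟨(h.strictMonoOn.le_iff_le hp hyI).1 hy.1, (h.strictMonoOn.le_iff_le hyI hq).1 hy.2⟩

theorem continuousOn_invFunOn (h : IsTranslationLike T I x₀) {p q : ℝ} (hp : p ∈ I)
    (hq : q ∈ I) : ContinuousOn (invFunOn T I) (Icc (T p) (T q)) := by
  refine StrictMonoOn.continuousOn_Icc_of_surjOn (fun y₁ hy₁ y₂ hy₂ hlt => ?_) ?_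
  · obtain ⟨hI₁, hT₁⟩ := h.invFunOn_mem_and_apply_of_mem_Icc hp hq hy₁
    obtain ⟨hI₂, hT₂⟩ := h.invFunOn_mem_and_apply_of_mem_Icc hp hq hy₂
    exact (h.strictMonoOn.lt_iff_lt hI₁ hI₂).1 (by rwa [hT₁, hT₂])
  · rw [h.invFunOn_apply hp, h.invFunOn_apply hq]
    intro z hz
    have hzI := h.ordConnected.out hp hq hz
    exact ⟨T z, ⟨h.strictMonoOn.monotoneOn hp hzI hz.1, h.strictMonoOn.monotoneOn hzI hq hz.2⟩,
      h.invFunOn_apply hzI⟩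

theorem continuousOn_Icc_iterate (h : IsTranslationLike T I x₀) {Q : ℝ} {a : ℝ → ℝ}
    (ha : SolvesFET I T Q a) (hbase : ContinuousOn a (Icc x₀ (T x₀))) (n : ℕ) :
    ContinuousOn a (Icc x₀ (T^[n + 1] x₀)) := by
  induction n with
  | zero => simpa using hbase
  | succ n ih =>
    have hp := h.iterate_mem n
    have hq := h.iterate_mem (n + 1)
    have hpiece : ContinuousOn a (Icc (T (T^[n] x₀)) (T (T^[n + 1] x₀))) := by
      refine (((ih.mono (Icc_subset_Icc_left (h.isLeast.2 hp))).comp (h.continuousOn_invFunOn hp hq)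
        (h.mapsTo_invFunOn hp hq)).add (continuousOn_const (c := Q))).congr fun y hy => ?_
      obtain ⟨hyI, hTy⟩ := h.invFunOn_mem_and_apply_of_mem_Icc hp hq hy
      have hy' : T (invFunOn T I y) ∈ I := by
        rw [hTy]; exact h.ordConnected.out (h.mapsTo hp) (h.mapsTo hq) hy
      simpa only [hTy, Pi.add_apply, comp_apply] using ha _ hyI hy'
    rw [← iterate_succ_apply' T n] at hpiece
    rw [iterate_succ_apply' T (n + 1), ← Icc_union_Icc_eq_Icc (h.isLeast.2 hq)
      (h.lt_apply _ hq).le]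
    exact ih.union_of_isClosed hpiece isClosed_Icc isClosed_Icc

theorem continuousOn_of_solvesFET (h : IsTranslationLike T I x₀) {Q : ℝ} {a a₀ : ℝ → ℝ}
    (ha : SolvesFET I T Q a) (ha₀ : EqOn a a₀ (Ico x₀ (T x₀)))
    (hcont : ContinuousOn a₀ (Ico x₀ (T x₀))) (hlim : Tendsto a₀ (𝓝[<] (T x₀)) (𝓝 (a₀ x₀ + Q))) :
    ContinuousOn a I := by
  have hx₀ : x₀ < T x₀ := h.lt_apply _ h.isLeast.1
  have hlim' : Tendsto a (𝓝[<] (T x₀)) (𝓝 (a (T x₀))) := by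
    rw [ha _ h.isLeast.1 (h.mapsTo h.isLeast.1), ha₀ ⟨le_rfl, hx₀⟩]
    exact hlim.congr' (eventuallyEq_of_mem (Ico_mem_nhdsLT hx₀) ha₀.symm)
  have hbase := (hcont.congr ha₀).Icc_of_Ico hx₀.le hlim'
  intro x hx
  obtain ⟨n, hn⟩ := h.exists_lt_iterate x hx
  have hn' : x < T^[n + 1] x₀ := hn.trans (h.strictMono_iterate n.lt_succ_self)
  refine (continuousWithinAt_inter (Iio_mem_nhds hn')).1 ?_
  exact (h.continuousOn_Icc_iterate ha hbase n x ⟨h.isLeast.2 hx, hn'.le⟩).mono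
    fun y hy => ⟨h.isLeast.2 hy.1, hy.2.le⟩

end IsTranslationLike

theorem stmt9_general (b : EReal) (hb : 0 < b)
    (I : Set ℝ) (hI : I = {x : ℝ | 0 ≤ x ∧ (x : EReal) < b})
    (T : ℝ → ℝ) (hcont : ContinuousOn T I) (hmono : StrictMonoOn T I)
    (c : ℝ) (himg : T '' I = {x : ℝ | c ≤ x ∧ (x : EReal) < b})
    (hgt : ∀ x ∈ I, T x > x) :
    (∃ a : ℝ → ℝ, ∀ x ∈ I, T x ∈ I → a (T x) = a x + 1) ∧
      (∀ a₀ : ℝ → ℝ,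
        (∃ a : ℝ → ℝ, (∀ x ∈ I, T x ∈ I → a (T x) = a x + 1) ∧
          (∀ x ∈ Ico 0 (T 0), a x = a₀ x)) ∧
        (∀ a a' : ℝ → ℝ,
          (∀ x ∈ I, T x ∈ I → a (T x) = a x + 1) → (∀ x ∈ Ico 0 (T 0), a x = a₀ x) →
          (∀ x ∈ I, T x ∈ I → a' (T x) = a' x + 1) → (∀ x ∈ Ico 0 (T 0), a' x = a₀ x) →
          EqOn a a' I) ∧
        (ContinuousOn a₀ (Ico 0 (T 0)) →
          Tendsto a₀ (nhdsWithin (T 0) (Iio (T 0))) (nhds (a₀ 0 + 1)) →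
          ∀ a : ℝ → ℝ, (∀ x ∈ I, T x ∈ I → a (T x) = a x + 1) →
            (∀ x ∈ Ico 0 (T 0), a x = a₀ x) → ContinuousOn a I)) := by
  have hmemI : ∀ {x}, x ∈ I ↔ 0 ≤ x ∧ (x : EReal) < b := by simp [hI]
  have hleast : IsLeast I 0 := ⟨hmemI.2 ⟨le_rfl, mod_cast hb⟩, fun _ hx => (hmemI.1 hx).1⟩
  have hconn : I.OrdConnected := ⟨fun _ hx _ hy _ hz => hmemI.2
    ⟨(hmemI.1 hx).1.trans hz.1, (EReal.coe_le_coe_iff.2 hz.2).trans_lt (hmemI.1 hy).2⟩⟩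
  have himg_sub : ∀ x ∈ I, c ≤ T x ∧ (T x : EReal) < b := fun x hx =>
    himg.subset (mem_image_of_mem T hx)
  have hmaps : MapsTo T I I := fun x hx =>
    hmemI.2 ⟨(hmemI.1 hx).1.trans (hgt x hx).le, (himg_sub x hx).2⟩
  have hsurj : SurjOn T I (I ∩ Ici (T 0)) := fun y ⟨hy, hy₀⟩ =>
    himg ▸ ⟨(himg_sub 0 hleast.1).1.trans hy₀, (hmemI.1 hy).2⟩
  have h : IsTranslationLike T I 0 := ⟨hleast, hconn, hmaps, hmono, hgt, hsurj,
    fun x hx => exists_lt_iterate_apply hcont hmaps hgt hleast.1 hx⟩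
  refine ⟨⟨_, h.solvesFET_fetExtension 1 0⟩, fun a₀ => ⟨⟨_, h.solvesFET_fetExtension 1 a₀,
    fetExtension_eqOn T I 0 1 a₀⟩,
    fun a a' ha ha₀ ha' ha'₀ => h.eqOn_of_solvesFET ha ha' (EqOn.trans ha₀ (EqOn.symm ha'₀)),
    fun hcont₀ hlim a ha ha₀ => h.continuousOn_of_solvesFET ha ha₀ hcont₀ hlim⟩⟩

/-- Let `0 < b ≤ ∞` (b an extended real), and let `T` be continuous, strictly
increasing on `I = [0, b)` with `T(I) = [c, b)` for some `c > 0`, and `T x > x` on `I`.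
Then FET(1) has a solution on `I`; the solution with prescribed values `a₀` on `[0, T 0)` is
unique; and if `a₀` is continuous on `[0, T 0)` with `lim_{x → T(0)⁻} a₀ x = a₀ 0 + 1`, then
that solution is continuous on `I`. -/
theorem stmt9 (b : EReal) (hb : 0 < b)
    (I : Set ℝ) (hI : I = {x : ℝ | 0 ≤ x ∧ (x : EReal) < b})
    (T : ℝ → ℝ) (hcont : ContinuousOn T I) (hmono : StrictMonoOn T I)
    (c : ℝ) (hc : 0 < c) (himg : T '' I = {x : ℝ | c ≤ x ∧ (x : EReal) < b})
    (hgt : ∀ x ∈ I, T x > x) :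
    (∃ a : ℝ → ℝ, ∀ x ∈ I, T x ∈ I → a (T x) = a x + 1) ∧
      (∀ a₀ : ℝ → ℝ,
        (∃ a : ℝ → ℝ, (∀ x ∈ I, T x ∈ I → a (T x) = a x + 1) ∧
          (∀ x ∈ Ico 0 (T 0), a x = a₀ x)) ∧
        (∀ a a' : ℝ → ℝ,
          (∀ x ∈ I, T x ∈ I → a (T x) = a x + 1) → (∀ x ∈ Ico 0 (T 0), a x = a₀ x) →
          (∀ x ∈ I, T x ∈ I → a' (T x) = a' x + 1) → (∀ x ∈ Ico 0 (T 0), a' x = a₀ x) →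
          EqOn a a' I) ∧
        (ContinuousOn a₀ (Ico 0 (T 0)) →
          Tendsto a₀ (nhdsWithin (T 0) (Iio (T 0))) (nhds (a₀ 0 + 1)) →
          ∀ a : ℝ → ℝ, (∀ x ∈ I, T x ∈ I → a (T x) = a x + 1) →
            (∀ x ∈ Ico 0 (T 0), a x = a₀ x) → ContinuousOn a I)) :=
  stmt9_general b hb I hI T hcont hmono c himg hgt
end

section
/- Let k and m be positive integers with m/k < 1/2, set θ = m π / k and ν = cot(θ) (so ν > 0), and let T_k denote the Chebyshev polynomial of the first kind of degree k. Then the function f(X) = T_k(cos(θ) · X) satisfies FEd(0) for the semi-elliptical bottom profile d(x) = √(1 − x²): that is, f(x − √(1 − x²)·tan(θ)) = f(x + √(1 − x²)·tan(θ)) for all x ∈ [−1, 1]. -/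
open Set Real

/-- Barcilon's Chebyshev solutions for the semi-ellipse. With
`θ = mπ/k`, `m/k < 1/2` (so that `ν = cot θ > 0`), the function
`f X = T_k (cos θ · X)` (`T_k` the degree-`k` Chebyshev polynomial of the first kind)
satisfies FEd(0) for the bottom `d x = √(1 - x²)`:
`f (x - √(1-x²) tan θ) = f (x + √(1-x²) tan θ)` for all `x ∈ [-1, 1]`. -/
theorem stmt16 (k m : ℕ) (hk : 0 < k) (hm : 0 < m) (hmk : (m : ℝ) / k < 1 / 2)
    (θ : ℝ) (hθ : θ = m * Real.pi / k)
    (f : ℝ → ℝ) (hf : ∀ X : ℝ, f X = (Polynomial.Chebyshev.T ℝ (k : ℤ)).eval (Real.cos θ * X)) :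
    (0 < Real.cot θ) ∧
      ∀ x ∈ Icc (-1 : ℝ) 1,
        f (x - Real.sqrt (1 - x ^ 2) * Real.tan θ) =
          f (x + Real.sqrt (1 - x ^ 2) * Real.tan θ) := by
  have hkR : (0 : ℝ) < k := by exact_mod_cast hk
  have hθpos : 0 < θ := by
    rw [hθ]
    positivity
  have hθlt : θ < Real.pi / 2 := by
    rw [hθ]
    have : (m : ℝ) * Real.pi / k = (m / k) * Real.pi := by ring
    rw [this]
    calc (m / k : ℝ) * Real.pi < (1 / 2) * Real.pi := by
          exact mul_lt_mul_of_pos_right hmk Real.pi_pos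
      _ = Real.pi / 2 := by ring
  have hcos : 0 < Real.cos θ := Real.cos_pos_of_mem_Ioo
    ⟨by linarith [Real.pi_pos], hθlt⟩
  have hsin : 0 < Real.sin θ := Real.sin_pos_of_pos_of_lt_pi hθpos
    (by linarith [Real.pi_pos])
  have hkθ : (k : ℝ) * θ = m * Real.pi := by
    rw [hθ]; field_simp
  constructor
  · rw [Real.cot_eq_cos_div_sin]; positivity
  · intro x hx
    obtain ⟨hx1, hx2⟩ := hx
    set φ := Real.arccos x with hφ
    have hcφ : Real.cos φ = x := Real.cos_arccos hx1 hx2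
    have hsφ : Real.sin φ = Real.sqrt (1 - x ^ 2) := by
      rw [hφ, Real.sin_arccos]
    rw [hf, hf]
    have htan : Real.tan θ = Real.sin θ / Real.cos θ := Real.tan_eq_sin_div_cos θ
    have h1 : Real.cos θ * (x - Real.sqrt (1 - x ^ 2) * Real.tan θ)
        = Real.cos (φ + θ) := by
      rw [Real.cos_add, hcφ, hsφ, htan]
      field_simp
    have h2 : Real.cos θ * (x + Real.sqrt (1 - x ^ 2) * Real.tan θ)
        = Real.cos (φ - θ) := by
      rw [Real.cos_sub, hcφ, hsφ, htan]
      field_simp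
    rw [h1, h2, Polynomial.Chebyshev.T_real_cos, Polynomial.Chebyshev.T_real_cos]
    have e1 : (k : ℝ) * (φ + θ) = (k : ℝ) * φ + m * Real.pi := by
      rw [mul_add, hkθ]
    have e2 : (k : ℝ) * (φ - θ) = (k : ℝ) * φ - m * Real.pi := by
      rw [mul_sub, hkθ]
    push_cast
    rw [e1, e2, Real.cos_add, Real.cos_sub, Real.sin_nat_mul_pi]
    ring
end
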